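/- For every x ≥ 0 and every u > 0, the Airy function satisfies |Ai(x + u²)| ≤ u^{-1/2}·e^{-2u³/3 − xu}. -/

import Mathlib

/-! Writing `y = x + u²`, the integrand `cos(t³/3 + y t)` is the real part of the entire function
`f(z) = exp(i(z³/3 + y z))` on the real axis. Cauchy's theorem moves the half-line of integration
to `ℝ_{≥0} + iu`: the vertical side at `Re z = T` vanishes as `T → ∞`, and the one on the
imaginary axis contributes a purely imaginary term. On the shifted line
`|f(s + iu)| = exp(u³/3 - y u - u s²)`, so the Gaussian integral gives
`|Ai(y)| ≤ exp(u³/3 - y u) / (2 √(π u))`, which is the claimed bound since `2 √π ≥ 1`. -/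

open MeasureTheory Real Filter

/-- The Airy function, defined for `x ∈ ℝ` by the convergent improper integral
`Ai(x) = (1/π) lim_{T→∞} ∫₀ᵀ cos(t³/3 + x t) dt`. -/
noncomputable def Ai (x : ℝ) : ℝ :=
  limUnder Filter.atTop
    (fun T : ℝ => (1 / Real.pi) * ∫ t in (0 : ℝ)..T, Real.cos (t ^ 3 / 3 + x * t))

open Complex Topology

theorem integral_eq_integral_shift_add_sides {f : ℂ → ℂ} (hf : Differentiable ℂ f) (T u : ℝ) :
    ∫ t in (0 : ℝ)..T, f t =
      (∫ s in (0 : ℝ)..T, f (s + u * I)) + I • (∫ v in (0 : ℝ)..u, f (v * I))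
        - I • (∫ v in (0 : ℝ)..u, f (T + v * I)) := by
  have h := integral_boundary_rect_eq_zero_of_differentiableOn f 0 ⟨T, u⟩ hf.differentiableOn
  simp only [zero_re, zero_im, ofReal_zero, zero_mul, zero_add, add_zero] at h
  linear_combination h

noncomputable def airyIntegrand (y : ℝ) (z : ℂ) : ℂ := Complex.exp (I * (z ^ 3 / 3 + y * z))

namespace airyIntegrand

variable (y : ℝ)

theorem differentiable : Differentiable ℂ (airyIntegrand y) := by
  unfold airyIntegrand
  fun_prop

theorem continuous : Continuous (airyIntegrand y) := (differentiable y).continuous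

theorem re_ofReal (t : ℝ) : (airyIntegrand y t).re = Real.cos (t ^ 3 / 3 + y * t) := by
  have h : I * ((t : ℂ) ^ 3 / 3 + y * t) = ((t ^ 3 / 3 + y * t : ℝ) : ℂ) * I := by
    push_cast
    ring
  rw [airyIntegrand, h, exp_ofReal_mul_I_re]

theorem ofReal_mul_I (v : ℝ) :
    airyIntegrand y (v * I) = ((Real.exp (v ^ 3 / 3 - y * v) : ℝ) : ℂ) := by
  rw [airyIntegrand, ofReal_exp]
  push_cast
  congr 1
  linear_combination (v ^ 3 / 3 * (I ^ 2 - 1) + y * v) * I_sq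

theorem norm_eq (a b : ℝ) :
    ‖airyIntegrand y (a + b * I)‖ = Real.exp (b ^ 3 / 3 - y * b - a ^ 2 * b) := by
  rw [airyIntegrand, norm_exp]
  congr 1
  simp [pow_succ]
  ring

theorem norm_shift_eq (u s : ℝ) :
    ‖airyIntegrand y (s + u * I)‖ = Real.exp (u ^ 3 / 3 - y * u) * Real.exp (-u * s ^ 2) := by
  rw [norm_eq, ← Real.exp_add]
  ring_nf

theorem integrableOn_shift {u : ℝ} (hu : 0 < u) :
    IntegrableOn (fun s : ℝ => airyIntegrand y (s + u * I)) (Set.Ioi 0) := by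
  refine Integrable.integrableOn <| Integrable.mono'
    ((integrable_exp_neg_mul_sq hu).const_mul (Real.exp (u ^ 3 / 3 - y * u))) ?_ ?_
  · exact ((continuous y).comp (by fun_prop)).aestronglyMeasurable
  · exact Eventually.of_forall fun s => (norm_shift_eq y u s).le

theorem tendsto_integral_side_zero {u : ℝ} (hu : 0 ≤ u) :
    Tendsto (fun T : ℝ => ∫ v in (0 : ℝ)..u, airyIntegrand y (T + v * I)) atTop (𝓝 0) := by
  have hlim := intervalIntegral.tendsto_integral_filter_of_dominated_convergence
    (μ := volume) (a := 0) (b := u) (l := atTop)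
    (F := fun (T : ℝ) (v : ℝ) => airyIntegrand y (T + v * I)) (f := fun _ => 0)
    (fun v => Real.exp (v ^ 3 / 3 - y * v))
    (Eventually.of_forall fun T =>
      ((continuous y).comp (by fun_prop)).aestronglyMeasurable.restrict)
    (Eventually.of_forall fun T => ?bound)
    ((by fun_prop : Continuous fun v : ℝ => Real.exp (v ^ 3 / 3 - y * v)).intervalIntegrable _ _)
    ?limit
  · simpa using hlim
  case bound =>
    refine Eventually.of_forall fun v hv => ?_
    rw [Set.uIoc_of_le hu] at hv
    rw [norm_eq, Real.exp_le_exp]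
    nlinarith [mul_nonneg (sq_nonneg T) hv.1.le]
  case limit =>
    refine Eventually.of_forall fun v hv => ?_
    rw [Set.uIoc_of_le hu] at hv
    rw [tendsto_zero_iff_norm_tendsto_zero]
    simp only [norm_eq, sub_eq_add_neg _ (_ ^ 2 * v), Real.exp_add]
    rw [← mul_zero (Real.exp (v ^ 3 / 3 - y * v))]
    refine (Real.tendsto_exp_atBot.comp ?_).const_mul _
    simpa only [mul_neg, neg_mul, mul_comm] using
      (tendsto_pow_atTop two_ne_zero).atTop_mul_const_of_neg (neg_neg_iff_pos.mpr hv.1)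

theorem tendsto_integral {u : ℝ} (hu : 0 < u) :
    Tendsto (fun T : ℝ => ∫ t in (0 : ℝ)..T, airyIntegrand y t) atTop
      (𝓝 ((∫ s in Set.Ioi (0 : ℝ), airyIntegrand y (s + u * I))
        + I • (∫ v in (0 : ℝ)..u, airyIntegrand y (v * I)))) := by
  have h := ((intervalIntegral_tendsto_integral_Ioi 0 (integrableOn_shift y hu)
    tendsto_id).add_const (I • ∫ v in (0 : ℝ)..u, airyIntegrand y (v * I))).sub
    ((tendsto_integral_side_zero y hu.le).const_smul I)
  rw [smul_zero, sub_zero] at h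
  exact h.congr fun T => (integral_eq_integral_shift_add_sides (differentiable y) T u).symm

theorem integral_re (T : ℝ) :
    (∫ t in (0 : ℝ)..T, airyIntegrand y t).re = ∫ t in (0 : ℝ)..T, Real.cos (t ^ 3 / 3 + y * t) := by
  have h := reCLM.intervalIntegral_comp_comm (μ := volume)
    (((continuous y).comp continuous_ofReal).intervalIntegrable 0 T)
  simp only [reCLM_apply, Function.comp_def, re_ofReal] at h
  exact h.symm

end airyIntegrand

theorem Ai_eq_re_integral_shift (y : ℝ) {u : ℝ} (hu : 0 < u) :
    Ai y = 1 / π * (∫ s in Set.Ioi (0 : ℝ), airyIntegrand y (s + u * I)).re := by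
  have hside : (I • ∫ v in (0 : ℝ)..u, airyIntegrand y (v * I)).re = 0 := by
    simp only [airyIntegrand.ofReal_mul_I, intervalIntegral.integral_ofReal, smul_eq_mul,
      mul_re, I_re, I_im, ofReal_re, ofReal_im]
    ring
  refine Tendsto.limUnder_eq ?_
  have h := (continuous_re.tendsto _).comp (airyIntegrand.tendsto_integral y hu)
  rw [Function.comp_def, add_re, hside, add_zero] at h
  simpa only [airyIntegrand.integral_re] using h.const_mul (1 / π)

theorem abs_Ai_le (y : ℝ) {u : ℝ} (hu : 0 < u) :
    |Ai y| ≤ 1 / π * (Real.exp (u ^ 3 / 3 - y * u) * (√(π / u) / 2)) := by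
  rw [Ai_eq_re_integral_shift y hu, abs_mul, abs_of_pos (by positivity)]
  gcongr
  calc |(∫ s in Set.Ioi (0 : ℝ), airyIntegrand y (s + u * I)).re|
      ≤ ∫ s in Set.Ioi (0 : ℝ), ‖airyIntegrand y (s + u * I)‖ :=
        (abs_re_le_norm _).trans (norm_integral_le_integral_norm _)
    _ = Real.exp (u ^ 3 / 3 - y * u) * (√(π / u) / 2) := by
        simp only [airyIntegrand.norm_shift_eq, integral_const_mul, integral_gaussian_Ioi]

theorem airy_shifted_bound_general (x u : ℝ) (hu : 0 < u) :
    |Ai (x + u ^ 2)| ≤ u ^ (-(1 : ℝ) / 2) * Real.exp (-2 * u ^ 3 / 3 - x * u) := by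
  have hexp : u ^ 3 / 3 - (x + u ^ 2) * u = -2 * u ^ 3 / 3 - x * u := by ring
  have hconst : 1 / π * (√(π / u) / 2) ≤ u ^ (-(1 : ℝ) / 2) := by
    have hsu : 0 < √u := sqrt_pos.mpr hu
    rw [neg_div, rpow_neg hu.le, ← sqrt_eq_rpow, sqrt_div pi_pos.le]
    field_simp
    exact (sqrt_le_left (by positivity)).mpr (by nlinarith [pi_gt_three])
  calc |Ai (x + u ^ 2)| ≤ 1 / π * (Real.exp (-2 * u ^ 3 / 3 - x * u) * (√(π / u) / 2)) := by
        simpa only [← hexp] using abs_Ai_le (x + u ^ 2) hu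
    _ = 1 / π * (√(π / u) / 2) * Real.exp (-2 * u ^ 3 / 3 - x * u) := by ring
    _ ≤ u ^ (-(1 : ℝ) / 2) * Real.exp (-2 * u ^ 3 / 3 - x * u) := by gcongr

/-- display `(A.5)` in Appendix A.1: for all `x ≥ 0` and `u > 0`,
`|Ai(x + u²)| ≤ u^{-1/2} e^{-2u³/3 − xu}`. -/
theorem airy_shifted_bound (x u : ℝ) (hx : 0 ≤ x) (hu : 0 < u) :
    |Ai (x + u ^ 2)| ≤ u ^ (-(1 : ℝ) / 2) * Real.exp (-2 * u ^ 3 / 3 - x * u) :=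
  airy_shifted_bound_general x u hu
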